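/- For n = 4 and distinct α = {i,j} ⊆ {1,2,3,4}, the set function r on subsets of {1,2,3,4} defined by r(A) = 3 if |A| = 2 and A ≠ α, and r(A) = min{4, 2|A|} otherwise, satisfies the polymatroidal axioms (normalization, monotonicity, and submodularity). -/

import Mathlib

/-!
Only the cardinality profile of `r` matters: `r` is `0, 2, 4, 4, …` on sets of size
`0, 1, 2, 3, …`, except that a pair may drop to `3`. For incomparable `A`, `B` the
intersection is strictly smaller than both, and then `r (A ∩ B) + 4 ≤ r A + r B` in each of
the cases `|A ∩ B| = 0, 1, ≥ 2`.
-/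

open Finset
noncomputable section

/-- The rank function of the polymatroid `V^α_8` on ground set `{1,2,3,4}` with
`α = {i,j}`: `r(A) = 3` if `|A| = 2` and `A ≠ α`, and `r(A) = min {4, 2|A|}` otherwise. -/
def rV8 (i j : Fin 4) (A : Finset (Fin 4)) : ℝ :=
  if A.card = 2 ∧ A ≠ {i, j} then 3 else min 4 (2 * (A.card : ℝ))

structure IsV8Type {α : Type*} (r : Finset α → ℝ) : Prop where
  empty : r ∅ = 0
  card_one : ∀ S, #S = 1 → r S = 2
  card_two : ∀ S, #S = 2 → 3 ≤ r S ∧ r S ≤ 4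
  card_ge_three : ∀ S, 3 ≤ #S → r S = 4

namespace IsV8Type

variable {α : Type*} {r : Finset α → ℝ}

lemma le_four (hr : IsV8Type r) (S : Finset α) : r S ≤ 4 := by
  rcases Nat.lt_or_ge #S 3 with hS | hS
  · interval_cases h : #S
    · rw [card_eq_zero.1 h, hr.empty]; norm_num
    · rw [hr.card_one S h]; norm_num
    · exact (hr.card_two S h).2
  · exact (hr.card_ge_three S hS).le

lemma le_two (hr : IsV8Type r) {S : Finset α} (hS : #S ≤ 1) : r S ≤ 2 := by
  interval_cases h : #S
  · rw [card_eq_zero.1 h, hr.empty]; norm_num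
  · exact (hr.card_one S h).le

lemma two_le (hr : IsV8Type r) {S : Finset α} (hS : 1 ≤ #S) : 2 ≤ r S := by
  rcases Nat.lt_or_ge #S 3 with hS' | hS'
  · interval_cases h : #S
    · exact (hr.card_one S h).ge
    · linarith [(hr.card_two S h).1]
  · linarith [hr.card_ge_three S hS']

lemma three_le (hr : IsV8Type r) {S : Finset α} (hS : 2 ≤ #S) : 3 ≤ r S := by
  rcases Nat.lt_or_ge #S 3 with hS' | hS'
  · exact (hr.card_two S (by omega)).1
  · linarith [hr.card_ge_three S hS']

lemma monotone (hr : IsV8Type r) {A B : Finset α} (hAB : A ⊆ B) : r A ≤ r B := by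
  rcases hAB.eq_or_ssubset with rfl | hlt
  · exact le_rfl
  have hcard := card_lt_card hlt
  rcases Nat.lt_or_ge #A 2 with hA | hA
  · exact (hr.le_two (by omega)).trans (hr.two_le (by omega))
  · rw [hr.card_ge_three B (by omega)]
    exact hr.le_four A

lemma submodular [DecidableEq α] (hr : IsV8Type r) (A B : Finset α) :
    r (A ∩ B) + r (A ∪ B) ≤ r A + r B := by
  by_cases hAB : A ⊆ B
  · rw [inter_eq_left.2 hAB, union_eq_right.2 hAB]
  by_cases hBA : B ⊆ A
  · rw [inter_eq_right.2 hBA, union_eq_left.2 hBA, add_comm]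
  have hA : #(A ∩ B) < #A := card_lt_card (inf_lt_left.2 hAB)
  have hB : #(A ∩ B) < #B := card_lt_card (inf_lt_right.2 hBA)
  have hunion := hr.le_four (A ∪ B)
  rcases Nat.lt_or_ge #(A ∩ B) 2 with hI | hI
  · interval_cases h : #(A ∩ B)
    · rw [card_eq_zero.1 h, hr.empty]
      linarith [hr.two_le (S := A) (by omega), hr.two_le (S := B) (by omega)]
    · linarith [hr.card_one _ h, hr.three_le (S := A) (by omega),
        hr.three_le (S := B) (by omega)]
  · linarith [hr.le_four (A ∩ B), hr.card_ge_three A (by omega), hr.card_ge_three B (by omega)]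

end IsV8Type

lemma isV8Type_rV8 (i j : Fin 4) : IsV8Type (rV8 i j) where
  empty := by simp [rV8]
  card_one S hS := by norm_num [rV8, hS]
  card_two S hS := by
    unfold rV8
    split_ifs <;> norm_num [hS]
  card_ge_three S hS := by
    have h6 : (6 : ℝ) ≤ 2 * #S := by exact_mod_cast (by omega : 6 ≤ 2 * #S)
    rw [rV8, if_neg (by omega), min_eq_left (by linarith)]

theorem statement5 (i j : Fin 4) :
    rV8 i j ∅ = 0 ∧
    (∀ A B : Finset (Fin 4), A ⊆ B → rV8 i j A ≤ rV8 i j B) ∧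
    (∀ A B : Finset (Fin 4),
      rV8 i j (A ∩ B) + rV8 i j (A ∪ B) ≤ rV8 i j A + rV8 i j B) :=
  ⟨(isV8Type_rV8 i j).empty, fun _ _ ↦ (isV8Type_rV8 i j).monotone,
    (isV8Type_rV8 i j).submodular⟩
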